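/- Let G = (V, E, V_out, g, c) be a weighted cyclic monotone circuit, let (v, u) ∈ E, and suppose there exist vertices w₁, …, w_n with edges (v, w₁), (w₁, w₂), …, (w_{n−1}, w_n), (w_n, u) ∈ E such that g(v) = g(w₁) = ⋯ = g(w_n) = g(u). Let G′ be the circuit obtained from G by deleting the edge (v, u). Then a function α : V → {0,1} is a valid evaluation of G if and only if it is a valid evaluation of G′; consequently G and G′ have the same satisfying and minimal satisfying evaluations. -/

import Mathlib

/-- Gate types for a monotone circuit. -/
inductive Gate where
  | AND : Gate
  | OR : Gate
deriving DecidableEq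

/-- A weighted cyclic monotone circuit: a directed graph with a set of outputs,
a gate-type function, and a cost function (costs are only meaningful on inputs). -/
structure Circuit (V : Type) where
  edge : V → V → Prop
  isOut : V → Prop
  gate : V → Gate
  cost : V → ℝ

namespace Circuit

variable {V : Type}

/-- The inputs are the vertices of in-degree 0. -/
def IsInput (G : Circuit V) (u : V) : Prop := ∀ v, ¬ G.edge v u

/-- A valid evaluation: each non-input gate evaluates to its gate function applied to
the values of its in-neighbors. -/
def Valid (G : Circuit V) (α : V → Bool) : Prop :=
  ∀ u : V, ¬ G.IsInput u →
    (α u = true ↔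
      match G.gate u with
      | Gate.AND => ∀ v, G.edge v u → α v = true
      | Gate.OR => ∃ v, G.edge v u ∧ α v = true)

/-- An evaluation satisfies the circuit if it is 1 on all outputs. -/
def Satisfies (G : Circuit V) (α : V → Bool) : Prop :=
  ∀ u, G.isOut u → α u = true

/-- The restriction `α|_A`: equal to `α` on `A` and `0` (false) elsewhere. -/
noncomputable def restrict (α : V → Bool) (A : Set V) : V → Bool :=
  fun u => @ite _ (u ∈ A) (Classical.propDecidable _) (α u) false

/-- A minimal satisfying evaluation: valid, satisfying, and no restriction of its
true set to a proper subset is a valid satisfying evaluation. -/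
def MinSat (G : Circuit V) (α : V → Bool) : Prop :=
  G.Valid α ∧ G.Satisfies α ∧
    ∀ A : Set V, A ⊂ {u | α u = true} →
      ¬ (G.Valid (restrict α A) ∧ G.Satisfies (restrict α A))

/-- `α` is acyclic if the subgraph `G[α]` induced by the true vertices has no
directed cycle. -/
def EvalAcyclic (G : Circuit V) (α : V → Bool) : Prop :=
  ∀ u, ¬ Relation.TransGen (fun a b => G.edge a b ∧ α a = true ∧ α b = true) u u

end Circuit


section Aux
variable {V : Type}

lemma chain_concat' {R : V → V → Prop} {y : V} :
    ∀ {x : V} {l : List V} (h : l ≠ []), List.Chain R x (l ++ [y]) →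
      List.Chain R x l ∧ R (l.getLast h) y := by
  intro x l
  induction l generalizing x with
  | nil => simp
  | cons w rest ih =>
    intro _ hc
    rw [List.cons_append, List.Chain, List.isChain_cons_cons] at hc
    rcases rest.eq_nil_or_concat with hr | _
    · subst hr
      simpa [List.Chain] using hc
    · have hrne : rest ≠ [] := by rintro rfl; simp_all
      obtain ⟨h1, h2⟩ := ih hrne hc.2
      exact ⟨List.IsChain.cons_cons hc.1 h1, by rwa [List.getLast_cons hrne]⟩

lemma chain_imp_mem {R S : V → V → Prop} :
    ∀ {x : V} {l : List V}, List.Chain R x l →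
      (∀ a b, b ∈ l → R a b → S a b) → List.Chain S x l := by
  intro x l
  induction l generalizing x with
  | nil => intro _ _; exact List.IsChain.singleton x
  | cons w rest ih =>
    intro hc h
    rw [List.Chain, List.isChain_cons_cons] at hc ⊢
    exact ⟨h _ _ (by simp) hc.1, ih hc.2 (fun a b hb => h a b (by simp [hb]))⟩

lemma chain_and {G : Circuit V} {α : V → Bool} (hval : G.Valid α) :
    ∀ {x : V} {l : List V} (h : l ≠ []), List.Chain G.edge x l →
      (∀ w ∈ l, G.gate w = Gate.AND) → α (l.getLast h) = true → α x = true := by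
  intro x l
  induction l generalizing x with
  | nil => simp
  | cons w rest ih =>
    intro _ hc hg hlast
    rw [List.Chain, List.isChain_cons_cons] at hc
    have hwni : ¬ G.IsInput w := fun hi => hi x hc.1
    have hw : α w = true → α x = true := by
      intro hwt
      have := (hval w hwni).1 hwt
      rw [hg w (by simp)] at this
      exact this x hc.1
    rcases rest.eq_nil_or_concat with hr | _
    · subst hr; exact hw (by simpa using hlast)
    · have hrne : rest ≠ [] := by rintro rfl; simp_all
      rw [List.getLast_cons hrne] at hlast
      exact hw (ih hrne hc.2 (fun a ha => hg a (by simp [ha])) hlast)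

lemma chain_or {G : Circuit V} {α : V → Bool} (hval : G.Valid α) :
    ∀ {x : V} {l : List V} (h : l ≠ []), List.Chain G.edge x l →
      (∀ w ∈ l, G.gate w = Gate.OR) → α x = true → α (l.getLast h) = true := by
  intro x l
  induction l generalizing x with
  | nil => simp
  | cons w rest ih =>
    intro _ hc hg hx
    rw [List.Chain, List.isChain_cons_cons] at hc
    have hwni : ¬ G.IsInput w := fun hi => hi x hc.1
    have hwt : α w = true := by
      apply (hval w hwni).2
      rw [hg w (by simp)]
      exact ⟨x, hc.1, hx⟩
    rcases rest.eq_nil_or_concat with hr | _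
    · subst hr; simpa using hwt
    · have hrne : rest ≠ [] := by rintro rfl; simp_all
      rw [List.getLast_cons hrne]
      exact ih hrne hc.2 (fun a ha => hg a (by simp [ha])) hwt

end Aux

/-- "same gate no shortcut": if `(v, u) ∈ E` and there is a path
`v → w₁ → ⋯ → w_n → u` (through distinct vertices) all of whose vertices have the same
gate type, then deleting the edge `(v, u)` changes neither the valid evaluations, nor
the valid satisfying evaluations, nor the minimal satisfying evaluations. -/
theorem stmt14 {V : Type} [Fintype V] (G : Circuit V) (v u : V) (ws : List V)
    (hvu : G.edge v u) (hne : ws ≠ [])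
    (hchain : List.Chain G.edge v (ws ++ [u]))
    (hpath : (v :: (ws ++ [u])).Nodup)
    (hgw : ∀ w ∈ ws, G.gate w = G.gate v) (hgu : G.gate u = G.gate v) :
    let G' : Circuit V := { G with edge := fun a b => G.edge a b ∧ ¬ (a = v ∧ b = u) }
    (∀ α : V → Bool, G.Valid α ↔ G'.Valid α) ∧
    (∀ α : V → Bool, (G.Valid α ∧ G.Satisfies α) ↔ (G'.Valid α ∧ G'.Satisfies α)) ∧
    (∀ α : V → Bool, G.MinSat α ↔ G'.MinSat α) := by
  intro G'
  -- basic path facts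
  have hvws : v ∉ ws := by
    have := hpath
    simp only [List.nodup_cons, List.mem_append] at this
    exact fun h => this.1 (Or.inl h)
  have huws : u ∉ ws := by
    have := hpath
    simp only [List.nodup_cons] at this
    have := this.2
    rw [List.nodup_append] at this
    intro h
    exact this.2.2 u h u (by simp) rfl
  set wn := ws.getLast hne with hwn
  have hwnmem : wn ∈ ws := List.getLast_mem hne
  have hwnv : wn ≠ v := fun h => hvws (h ▸ hwnmem)
  obtain ⟨hchainws, hwnu⟩ := chain_concat' hne hchain
  -- edge facts
  have hGsub : ∀ a b, G'.edge a b → G.edge a b := fun a b h => h.1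
  have hedge' : ∀ a b, b ≠ u → (G'.edge a b ↔ G.edge a b) := by
    intro a b hb
    exact ⟨fun h => h.1, fun h => ⟨h, fun hc => hb hc.2⟩⟩
  have hwnu' : G'.edge wn u := ⟨hwnu, fun hc => hwnv hc.1⟩
  have hchainws' : List.Chain G'.edge v ws :=
    chain_imp_mem hchainws (fun a b hb h => ⟨h, fun hc => huws (hc.2 ▸ hb)⟩)
  -- inputs coincide
  have hInput : ∀ a, G.IsInput a ↔ G'.IsInput a := by
    intro a
    constructor
    · exact fun hi w hw => hi w (hGsub _ _ hw)
    · intro hi w hw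
      by_cases ha : a = u
      · exact hi wn (ha ▸ hwnu')
      · exact hi w ((hedge' w a ha).2 hw)
  -- main lemma: valid evaluations coincide
  have key : ∀ α : V → Bool, G.Valid α ↔ G'.Valid α := by
    intro α
    constructor
    · intro hval a hni
      have hniG : ¬ G.IsInput a := fun h => hni ((hInput a).1 h)
      by_cases ha : a = u
      · subst ha
        have hv := hval a hniG
        cases hg : G.gate a with
        | AND =>
          rw [hg] at hv
          constructor
          · intro ht x hx
            exact hv.1 ht x (hGsub _ _ hx)
          · intro h'
            have hαwn : α wn = true := h' wn hwnu'
            have hαv : α v = true :=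
              chain_and hval hne hchainws
                (fun w hw => by rw [hgw w hw, ← hgu]; exact hg) hαwn
            apply hv.2
            intro x hx
            by_cases hxv : x = v
            · exact hxv ▸ hαv
            · exact h' x ⟨hx, fun hc => hxv hc.1⟩
        | OR =>
          rw [hg] at hv
          constructor
          · intro ht
            obtain ⟨x, hx, hαx⟩ := hv.1 ht
            by_cases hxv : x = v
            · subst hxv
              have hαwn : α wn = true :=
                chain_or hval hne hchainws
                  (fun w hw => by rw [hgw w hw, ← hgu]; exact hg) hαx
              exact ⟨wn, hwnu', hαwn⟩
            · exact ⟨x, ⟨hx, fun hc => hxv hc.1⟩, hαx⟩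
          · rintro ⟨x, hx, hαx⟩
            exact hv.2 ⟨x, hGsub _ _ hx, hαx⟩
      · have hv := hval a hniG
        cases hg : G.gate a with
        | AND =>
          rw [hg] at hv
          exact ⟨fun ht x hx => hv.1 ht x (hGsub _ _ hx),
            fun h' => hv.2 fun x hx => h' x ((hedge' x a ha).2 hx)⟩
        | OR =>
          rw [hg] at hv
          exact ⟨fun ht => (hv.1 ht).imp fun x ⟨hx, hαx⟩ => ⟨(hedge' x a ha).2 hx, hαx⟩,
            fun ⟨x, hx, hαx⟩ => hv.2 ⟨x, hGsub _ _ hx, hαx⟩⟩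
    · intro hval a hni
      have hniG' : ¬ G'.IsInput a := fun h => hni ((hInput a).2 h)
      by_cases ha : a = u
      · subst ha
        have hv := hval a hniG'
        cases hg : G.gate a with
        | AND =>
          rw [show G'.gate a = Gate.AND from hg] at hv
          constructor
          · intro ht x hx
            by_cases hxv : x = v
            · subst hxv
              have hαwn : α wn = true := hv.1 ht wn hwnu'
              exact chain_and hval hne hchainws'
                (fun w hw => by rw [show G'.gate w = G.gate w from rfl, hgw w hw, ← hgu]; exact hg) hαwn
            · exact hv.1 ht x ⟨hx, fun hc => hxv hc.1⟩
          · intro h'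
            exact hv.2 fun x hx => h' x (hGsub _ _ hx)
        | OR =>
          rw [show G'.gate a = Gate.OR from hg] at hv
          constructor
          · intro ht
            obtain ⟨x, hx, hαx⟩ := hv.1 ht
            exact ⟨x, hGsub _ _ hx, hαx⟩
          · rintro ⟨x, hx, hαx⟩
            apply hv.2
            by_cases hxv : x = v
            · subst hxv
              have hαwn : α wn = true :=
                chain_or hval hne hchainws'
                  (fun w hw => by rw [show G'.gate w = G.gate w from rfl, hgw w hw, ← hgu]; exact hg) hαx
              exact ⟨wn, hwnu', hαwn⟩
            · exact ⟨x, ⟨hx, fun hc => hxv hc.1⟩, hαx⟩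
      · have hv := hval a hniG'
        cases hg : G.gate a with
        | AND =>
          rw [show G'.gate a = Gate.AND from hg] at hv
          exact ⟨fun ht x hx => hv.1 ht x ((hedge' x a ha).2 hx),
            fun h' => hv.2 fun x hx => h' x (hGsub _ _ hx)⟩
        | OR =>
          rw [show G'.gate a = Gate.OR from hg] at hv
          exact ⟨fun ht => (hv.1 ht).imp fun x ⟨hx, hαx⟩ => ⟨hGsub _ _ hx, hαx⟩,
            fun ⟨x, hx, hαx⟩ => hv.2 ⟨x, (hedge' x a ha).2 hx, hαx⟩⟩
  have hsat : ∀ α : V → Bool, G.Satisfies α ↔ G'.Satisfies α := fun α => Iff.rfl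
  refine ⟨key, fun α => by rw [key, hsat], fun α => ?_⟩
  unfold Circuit.MinSat
  constructor
  · rintro ⟨h1, h2, h3⟩
    exact ⟨(key α).1 h1, (hsat α).1 h2, fun A hA hc =>
      h3 A hA ⟨(key _).2 hc.1, (hsat _).2 hc.2⟩⟩
  · rintro ⟨h1, h2, h3⟩
    exact ⟨(key α).2 h1, (hsat α).2 h2, fun A hA hc =>
      h3 A hA ⟨(key _).1 hc.1, (hsat _).1 hc.2⟩⟩
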